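/- arXiv:2411.04528 — 2 statements merged into one kernel-verified Lean document; each statement's English description precedes it below -/
import Mathlib

section
/- Let 0 < τ < t ≤ 1 with τ, t ∈ ℚ, set ε := (t−τ)/6, and let δ > 0 be small enough that log log(1/δ) ≥ 4 and log(1/δ) ≤ δ^{−ε²/2}, and such that (log(1/δ))^{1/ε}, (log(1/δ))^{τ/ε}, (log(1/δ))^{(1+τ)/(2ε)}, (log(1/δ))^{(1−τ)/(2ε)} are all integers ≥ 2. Set ρ := (log(1/δ))^{−1/ε} and n := ⌈ε·log(1/δ)/log log(1/δ)⌉. Then A + ΘB ⊂ [H]_{Cδ} for an absolute constant C > 0, where A + ΘB := {a + θb : a ∈ A, θ ∈ Θ, b ∈ B} and [H]_{Cδ} denotes the closed Cδ-neighbourhood of H. -/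
open MeasureTheory Metric Set Real

noncomputable section

namespace Stmt9Aux

lemma summable_of_digits {ρ : ℝ} (h0 : 0 ≤ ρ) (h1 : ρ < 1) {d : ℕ → ℝ}
    (hd0 : ∀ j, 0 ≤ d j) (hd1 : ∀ j, d j ≤ 1) :
    Summable (fun j => ρ ^ j * d j) := by
  refine Summable.of_nonneg_of_le (fun j => mul_nonneg (pow_nonneg h0 j) (hd0 j))
    (fun j => ?_) (summable_geometric_of_lt_one h0 h1)
  calc ρ ^ j * d j ≤ ρ ^ j * 1 := mul_le_mul_of_nonneg_left (hd1 j) (pow_nonneg h0 j)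
    _ = ρ ^ j := mul_one _

lemma summable_of_digits' {ρ : ℝ} (h0 : 0 ≤ ρ) (h1 : ρ < 1) {d : ℕ → ℝ}
    (hd0 : ∀ j, 0 ≤ d j) (hd1 : ∀ j, d j ≤ (j : ℝ) + 2) :
    Summable (fun j => ρ ^ j * d j) := by
  have hlin : Summable (fun j : ℕ => (j : ℝ) * ρ ^ j) := by
    simpa using summable_pow_mul_geometric_of_norm_lt_one 1
      (by rwa [Real.norm_eq_abs, abs_of_nonneg h0] : ‖ρ‖ < 1)
  have hconst : Summable (fun j : ℕ => (2:ℝ) * ρ ^ j) :=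
    (summable_geometric_of_lt_one h0 h1).mul_left 2
  have hs : Summable (fun j : ℕ => ((j:ℝ) + 2) * ρ ^ j) := by
    simpa [add_mul] using hlin.add hconst
  refine Summable.of_nonneg_of_le (fun j => mul_nonneg (pow_nonneg h0 j) (hd0 j))
    (fun j => ?_) hs
  calc ρ ^ j * d j ≤ ρ ^ j * ((j:ℝ) + 2) := mul_le_mul_of_nonneg_left (hd1 j) (pow_nonneg h0 j)
    _ = ((j:ℝ) + 2) * ρ ^ j := mul_comm _ _

lemma tsum_digits_nonneg {ρ : ℝ} (h0 : 0 ≤ ρ) {d : ℕ → ℝ} (hd0 : ∀ j, 0 ≤ d j) :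
    0 ≤ ∑' j, ρ ^ j * d j :=
  tsum_nonneg (fun j => mul_nonneg (pow_nonneg h0 j) (hd0 j))

lemma tsum_digits_le_two {ρ : ℝ} (h0 : 0 ≤ ρ) (h1 : ρ ≤ 1/2) {d : ℕ → ℝ}
    (hd0 : ∀ j, 0 ≤ d j) (hd1 : ∀ j, d j ≤ 1) :
    ∑' j, ρ ^ j * d j ≤ 2 := by
  have h1' : ρ < 1 := lt_of_le_of_lt h1 (by norm_num)
  calc ∑' j, ρ ^ j * d j ≤ ∑' j : ℕ, ρ ^ j := by
        refine Summable.tsum_le_tsum (fun j => ?_) (summable_of_digits h0 h1' hd0 hd1)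
          (summable_geometric_of_lt_one h0 h1')
        calc ρ ^ j * d j ≤ ρ ^ j * 1 :=
              mul_le_mul_of_nonneg_left (hd1 j) (pow_nonneg h0 j)
          _ = ρ ^ j := mul_one _
    _ = (1 - ρ)⁻¹ := tsum_geometric_of_lt_one h0 h1'
    _ ≤ 2 := by
        rw [inv_le_comm₀ (by linarith) (by norm_num)]
        linarith

lemma digit_le_one {ρ : ℝ} (hρ : 0 < ρ) (s : ℝ) {k : ℝ}
    (hk : k ≤ ρ ^ (-s) - 1) : k * ρ ^ s ≤ 1 := by
  have hpos : (0:ℝ) < ρ ^ s := Real.rpow_pos_of_pos hρ s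
  have h1 : (ρ ^ (-s)) * ρ ^ s = 1 := by
    rw [← Real.rpow_add hρ]; simp
  nlinarith

end Stmt9Aux

open Stmt9Aux

set_option maxHeartbeats 1000000 in
/-- The inclusion `A + Theta B ⊆ [H]_{C delta}` from the proof of Lemma 3.2. -/
theorem stmt9 :
    ∃ C : Real, 0 < C ∧
    forall t tau : Rat, 0 < tau -> tau < t -> t <= 1 ->
    forall eps : Real, eps = ((t:Real) - (tau:Real))/6 ->
    forall delta : Real, 0 < delta ->
    4 <= Real.logb 2 (Real.logb 2 (1/delta)) ->
    Real.logb 2 (1/delta) <= delta ^ (-(eps^2)/2) ->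
    (∃ N : Nat, 2 <= N ∧ (N : Real) = (Real.logb 2 (1/delta)) ^ (1/eps)) ->
    (∃ N : Nat, 2 <= N ∧ (N : Real) = (Real.logb 2 (1/delta)) ^ ((tau:Real)/eps)) ->
    (∃ N : Nat, 2 <= N ∧ (N : Real) = (Real.logb 2 (1/delta)) ^ ((1 + (tau:Real))/(2*eps))) ->
    (∃ N : Nat, 2 <= N ∧ (N : Real) = (Real.logb 2 (1/delta)) ^ ((1 - (tau:Real))/(2*eps))) ->
    let rho : Real := (Real.logb 2 (1/delta)) ^ (-1/eps)
    let n : Nat := ⌈eps * Real.logb 2 (1/delta) / Real.logb 2 (Real.logb 2 (1/delta))⌉₊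
    let A : Set Real := {x : Real | ∃ kk : Nat -> Nat,
      (forall j : Nat, (kk j : Real) <= rho ^ (-(1 + (tau:Real))/2) - 1) ∧
      x = ∑' j : Nat, rho ^ j * ((kk j : Real) * rho ^ ((1 + (tau:Real))/2))}
    let B : Set Real := {x : Real | ∃ ll : Nat -> Nat,
      (forall j : Nat, (ll j : Real) <= rho ^ (-(1 - (tau:Real))/2) - 1) ∧
      x = ∑' j : Nat, rho ^ j * ((ll j : Real) * rho ^ ((1 - (tau:Real))/2))}
    let Theta : Set Real := {x : Real | ∃ rr : Nat -> Nat,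
      (forall j : Nat, (rr j : Real) <= rho ^ (-(tau:Real)) - 1) ∧
      x = ∑' j : Nat, rho ^ j * ((rr j : Real) * rho ^ ((tau:Real)))}
    let H : Set Real := {x : Real | ∃ ss : Nat -> Nat,
      (forall kk : Nat, kk <= n -> (ss kk : Real) <= 2 * (n:Real) * rho ^ (-(1 + (tau:Real))/2)) ∧
      x = ∑ kk ∈ Finset.range (n+1), rho ^ kk * ((ss kk : Real) * rho ^ ((1 + (tau:Real))/2))}
    ∀ a ∈ A, ∀ theta ∈ Theta, ∀ b ∈ B,
      ∃ h ∈ H, |a + theta * b - h| <= C * delta := by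
  refine ⟨6, by norm_num, ?_⟩
  intro t tau htau0 htt ht1 eps heps delta hdelta0 hLL hLd hN1 hN2 hN3 hN4
  intro rho n A B Theta H a ha theta htheta b hb
  obtain ⟨kk, hkk, hak⟩ := ha
  obtain ⟨rr, hrr, hthk⟩ := htheta
  obtain ⟨ll, hlb, hbk⟩ := hb
  set M : ℝ := Real.logb 2 (1/delta) with hMdef
  -- basic numeric facts
  have htauR : (0:ℝ) < (tau:ℝ) := by exact_mod_cast htau0
  have htR : ((tau:ℝ)) < (t:ℝ) := by exact_mod_cast htt
  have ht1R : ((t:ℝ)) ≤ 1 := by exact_mod_cast ht1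
  have htau1 : ((tau:ℝ)) < 1 := lt_of_lt_of_le htR ht1R
  have heps0 : 0 < eps := by rw [heps]; linarith
  have heps6 : eps < 1/6 := by rw [heps]; linarith
  have hie : 6 ≤ 1/eps := by rw [le_div_iff₀ heps0]; linarith
  have hl2 : (0:ℝ) < Real.log 2 := Real.log_pos (by norm_num)
  have hM0 : M ≠ 0 := by
    intro h
    rw [h, Real.logb_zero] at hLL
    norm_num at hLL
  have habs0 : (0:ℝ) < |M| := abs_pos.mpr hM0
  have habsM : (16:ℝ) ≤ |M| := by
    have h4 : (4:ℝ) * Real.log 2 ≤ Real.log M := by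
      rw [Real.logb, le_div_iff₀ hl2] at hLL; linarith
    have h16 : Real.exp (4 * Real.log 2) = 16 := by
      rw [show (4:ℝ) * Real.log 2 = Real.log (2^(4:ℕ)) by rw [Real.log_pow]; push_cast; ring]
      rw [Real.exp_log (by norm_num)]
      norm_num
    calc (16:ℝ) = Real.exp (4 * Real.log 2) := h16.symm
      _ ≤ Real.exp (Real.log |M|) := Real.exp_le_exp.mpr (by rw [Real.log_abs]; exact h4)
      _ = |M| := Real.exp_log habs0
  have hrho_def : rho = M ^ (-1/eps) := rfl
  have hrho_invabsM : rho ≤ |M|⁻¹ := by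
    have h1 : rho ≤ |M| ^ (-1/eps) :=
      le_trans (le_abs_self rho) (Real.abs_rpow_le_abs_rpow M (-1/eps))
    have h2 : |M| ^ (-1/eps) ≤ |M| ^ (-1:ℝ) := by
      apply Real.rpow_le_rpow_of_exponent_le (by linarith)
      rw [neg_div]
      linarith
    rw [Real.rpow_neg_one] at h2
    linarith
  have hrho_16 : rho ≤ 1/16 := by
    have : |M|⁻¹ ≤ 1/16 := by
      rw [inv_le_comm₀ habs0 (by norm_num)]
      norm_num
      linarith
    linarith
  have hrho1 : rho < 1 := lt_of_le_of_lt hrho_16 (by norm_num)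
  -- if rho ≤ 0 the set A is empty
  rcases le_or_gt rho 0 with hrho0 | hρpos
  · exfalso
    have h1 : ((kk 0 : ℕ):ℝ) ≤ rho ^ (-(1 + (tau:ℝ))/2) - 1 := hkk 0
    have h2 : rho ^ (-(1 + (tau:ℝ))/2) ≤ 0 := by
      rcases hrho0.lt_or_eq with hlt | heq
      · rw [Real.rpow_def_of_neg hlt]
        have hcos : Real.cos ((-(1+(tau:ℝ))/2) * π) < 0 := by
          rw [show (-(1+(tau:ℝ))/2) * π = -(((1+(tau:ℝ))/2) * π) by ring, Real.cos_neg]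
          apply Real.cos_neg_of_pi_div_two_lt_of_lt
          · calc π/2 = (1/2)*π := by ring
              _ < ((1+(tau:ℝ))/2)*π := mul_lt_mul_of_pos_right (by linarith) Real.pi_pos
          · calc ((1+(tau:ℝ))/2)*π < (3/2)*π :=
                mul_lt_mul_of_pos_right (by linarith) Real.pi_pos
              _ = π + π/2 := by ring
        have hexp := Real.exp_pos (Real.log rho * (-(1+(tau:ℝ))/2))
        exact (mul_neg_of_pos_of_neg hexp hcos).le
      · rw [heq, Real.zero_rpow]
        intro h
        have : (0:ℝ) < (1 + (tau:ℝ))/2 := by linarith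
        rw [neg_div] at h
        linarith
    have : (0:ℝ) ≤ ((kk 0 : ℕ):ℝ) := Nat.cast_nonneg _
    linarith
  -- rho > 0: digit bounds and bounds on a, theta, b
  have e1 : -(1 + (tau:ℝ))/2 = -((1 + (tau:ℝ))/2) := by ring
  have e2 : -(1 - (tau:ℝ))/2 = -((1 - (tau:ℝ))/2) := by ring
  simp only [e1] at hkk
  simp only [e2] at hlb
  have hka : ∀ j, ((kk j):ℝ) * rho ^ ((1+(tau:ℝ))/2) ≤ 1 :=
    fun j => digit_le_one hρpos _ (hkk j)
  have hra : ∀ j, ((rr j):ℝ) * rho ^ ((tau:ℝ)) ≤ 1 :=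
    fun j => digit_le_one hρpos _ (hrr j)
  have hla : ∀ j, ((ll j):ℝ) * rho ^ ((1-(tau:ℝ))/2) ≤ 1 :=
    fun j => digit_le_one hρpos _ (hlb j)
  have hkd0 : ∀ j, (0:ℝ) ≤ ((kk j):ℝ) * rho ^ ((1+(tau:ℝ))/2) := fun j => by positivity
  have hrd0 : ∀ j, (0:ℝ) ≤ ((rr j):ℝ) * rho ^ ((tau:ℝ)) := fun j => by positivity
  have hld0 : ∀ j, (0:ℝ) ≤ ((ll j):ℝ) * rho ^ ((1-(tau:ℝ))/2) := fun j => by positivity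
  have hSa : Summable (fun j : ℕ => rho ^ j * (((kk j):ℝ) * rho ^ ((1+(tau:ℝ))/2))) :=
    summable_of_digits hρpos.le hrho1 hkd0 hka
  have hSth : Summable (fun j : ℕ => rho ^ j * (((rr j):ℝ) * rho ^ ((tau:ℝ)))) :=
    summable_of_digits hρpos.le hrho1 hrd0 hra
  have hSb : Summable (fun j : ℕ => rho ^ j * (((ll j):ℝ) * rho ^ ((1-(tau:ℝ))/2))) :=
    summable_of_digits hρpos.le hrho1 hld0 hla
  have hrho2 : rho ≤ 1/2 := by linarith
  have ha0 : 0 ≤ a := by rw [hak]; exact tsum_digits_nonneg hρpos.le hkd0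
  have ha2 : a ≤ 2 := by rw [hak]; exact tsum_digits_le_two hρpos.le hrho2 hkd0 hka
  have hth0 : 0 ≤ theta := by rw [hthk]; exact tsum_digits_nonneg hρpos.le hrd0
  have hth2 : theta ≤ 2 := by rw [hthk]; exact tsum_digits_le_two hρpos.le hrho2 hrd0 hra
  have hb0 : 0 ≤ b := by rw [hbk]; exact tsum_digits_nonneg hρpos.le hld0
  have hb2 : b ≤ 2 := by rw [hbk]; exact tsum_digits_le_two hρpos.le hrho2 hld0 hla
  rcases lt_or_ge M 0 with hMneg | hMge
  -- degenerate case: M < 0, then delta ≥ 1 and n = 0, take h = 0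
  · have hdelta1 : (1:ℝ) ≤ delta := by
      by_contra hc
      push_neg at hc
      have : 0 < M := by
        rw [hMdef]
        apply Real.logb_pos (by norm_num)
        rw [lt_div_iff₀ hdelta0]
        linarith
      linarith
    have hlogbM : (0:ℝ) < Real.logb 2 M := by linarith
    have hn0 : n = 0 := by
      have : n = ⌈eps * M / Real.logb 2 M⌉₊ := rfl
      rw [this, Nat.ceil_eq_zero]
      apply div_nonpos_of_nonpos_of_nonneg _ hlogbM.le
      calc eps * M ≤ eps * 0 := mul_le_mul_of_nonneg_left hMneg.le heps0.le
        _ = 0 := mul_zero _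
    refine ⟨0, ⟨fun _ => 0, ?_, ?_⟩, ?_⟩
    · intro k hk
      simp only [Nat.cast_zero]
      positivity
    · simp
    · have htb0 : (0:ℝ) ≤ theta * b := mul_nonneg hth0 hb0
      have htb4 : theta * b ≤ 4 := by
        calc theta * b ≤ 2 * 2 := mul_le_mul hth2 hb2 hb0 (by norm_num)
          _ = 4 := by norm_num
      rw [sub_zero, abs_of_nonneg (by linarith)]
      linarith
  -- main case : M > 0
  have hMpos : 0 < M := lt_of_le_of_ne hMge (Ne.symm hM0)
  have hM16 : (16:ℝ) ≤ M := by rwa [abs_of_pos hMpos] at habsM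
  have hlogM : 0 < Real.log M := Real.log_pos (by linarith)
  have hlogbMpos : (0:ℝ) < Real.logb 2 M := by linarith
  have hrhoM : rho ≤ M⁻¹ := by rwa [abs_of_pos hMpos] at hrho_invabsM
  have hn_def : n = ⌈eps * M / Real.logb 2 M⌉₊ := rfl
  have hq_le_n : eps * M / Real.logb 2 M ≤ (n:ℝ) := by rw [hn_def]; exact Nat.le_ceil _
  have hlogdelta : Real.logb 2 delta = -M := by
    rw [hMdef, Real.logb, Real.logb, one_div, Real.log_inv]
    ring
  have hlogb_le : Real.logb 2 M ≤ eps^2 * M / 2 := by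
    have h1 : Real.logb 2 M ≤ Real.logb 2 (delta ^ (-(eps^2)/2)) := by
      apply (Real.logb_le_logb (by norm_num) hMpos (by positivity)).mpr
      exact hLd
    rw [Real.logb_rpow_eq_mul_logb_of_pos hdelta0, hlogdelta] at h1
    have hr : (-(eps^2)/2) * (-M) = eps^2 * M / 2 := by ring
    linarith
  have hq_ge : 2/eps ≤ eps * M / Real.logb 2 M := by
    rw [div_le_div_iff₀ heps0 hlogbMpos]
    have hr : eps * M * eps = eps^2 * M := by ring
    linarith
  have hn12 : (12:ℝ) ≤ (n:ℝ) := by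
    have h1 : (12:ℝ) ≤ 2/eps := by
      rw [le_div_iff₀ heps0]; linarith
    linarith
  have hn2 : 2 ≤ n := by exact_mod_cast (show (2:ℝ) ≤ (n:ℝ) by linarith)
  have hnM : (n:ℝ) ≤ M := by
    have h1 : (n:ℝ) < eps * M / Real.logb 2 M + 1 := by
      rw [hn_def]
      exact Nat.ceil_lt_add_one (by positivity)
    have h2 : eps * M / Real.logb 2 M ≤ eps * M / 4 := by
      apply div_le_div_of_nonneg_left (by positivity) (by norm_num)
      exact hLL
    have h3 : eps * M ≤ (1/6) * M := mul_le_mul_of_nonneg_right heps6.le hMpos.le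
    linarith
  have hnrho : (n:ℝ) * rho ≤ 1 := by
    calc (n:ℝ) * rho ≤ M * M⁻¹ := by
          apply mul_le_mul hnM hrhoM hρpos.le (by linarith)
      _ = 1 := mul_inv_cancel₀ hM0
  have hrhon : rho ^ n ≤ delta := by
    have hdelta_eq : delta = (2:ℝ) ^ (-M) := by
      have h2M : (2:ℝ) ^ M = 1/delta := by
        rw [hMdef]
        exact Real.rpow_logb (by norm_num) (by norm_num) (by positivity)
      rw [Real.rpow_neg (by norm_num : (0:ℝ) ≤ 2), h2M, one_div, inv_inv]
    have hrhon_eq : rho ^ n = M ^ ((-1/eps) * (n:ℝ)) := by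
      rw [hrho_def, ← Real.rpow_natCast (M ^ (-1/eps)) n]
      exact (Real.rpow_mul hMpos.le _ _).symm
    rw [hrhon_eq, hdelta_eq, Real.rpow_def_of_pos hMpos,
      Real.rpow_def_of_pos (by norm_num : (0:ℝ) < 2)]
    apply Real.exp_le_exp.mpr
    have h1 : eps * M / Real.logb 2 M ≤ (n:ℝ) := hq_le_n
    rw [Real.logb, div_div_eq_mul_div, div_le_iff₀ hlogM] at h1
    -- h1 : eps * M * log 2 ≤ n * log M
    have h4 : Real.log M * (-1/eps * (n:ℝ)) = -(Real.log M * (n:ℝ) / eps) := by ring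
    have h5 : Real.log 2 * (-M) = -(Real.log 2 * M) := by ring
    rw [h4, h5, neg_le_neg_iff, le_div_iff₀ heps0]
    linarith [h1]
  -- Cauchy product
  have hnormth : Summable (fun j : ℕ => ‖rho ^ j * (((rr j):ℝ) * rho ^ ((tau:ℝ)))‖) :=
    hSth.congr (fun j => (Real.norm_of_nonneg (by positivity)).symm)
  have hnormb : Summable (fun j : ℕ => ‖rho ^ j * (((ll j):ℝ) * rho ^ ((1-(tau:ℝ))/2))‖) :=
    hSb.congr (fun j => (Real.norm_of_nonneg (by positivity)).symm)
  have hrpowsum : rho ^ ((tau:ℝ)) * rho ^ ((1-(tau:ℝ))/2) = rho ^ ((1+(tau:ℝ))/2) := by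
    rw [← Real.rpow_add hρpos]
    congr 1
    ring
  set D : ℕ → ℕ := fun m => ∑ i ∈ Finset.range (m+1), rr i * ll (m - i) with hDdef
  have hDcast : ∀ m, ((D m):ℝ) = ∑ i ∈ Finset.range (m+1), ((rr i):ℝ) * ((ll (m-i)):ℝ) := by
    intro m
    rw [hDdef]
    push_cast
    rfl
  have hcauchy : theta * b = ∑' m, rho ^ m * (((D m):ℝ) * rho ^ ((1+(tau:ℝ))/2)) := by
    rw [hthk, hbk, tsum_mul_tsum_eq_tsum_sum_range_of_summable_norm hnormth hnormb]
    refine tsum_congr fun m => ?_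
    calc ∑ i ∈ Finset.range (m+1),
            (rho^i * (((rr i):ℝ) * rho^((tau:ℝ)))) * (rho^(m-i) * (((ll (m-i)):ℝ) * rho^((1-(tau:ℝ))/2)))
        = ∑ i ∈ Finset.range (m+1),
            rho ^ m * ((((rr i):ℝ) * ((ll (m-i)):ℝ)) * rho ^ ((1+(tau:ℝ))/2)) := by
          refine Finset.sum_congr rfl fun i hi => ?_
          have him : i ≤ m := Nat.lt_succ_iff.mp (Finset.mem_range.mp hi)
          rw [show (rho^i * (((rr i):ℝ) * rho^((tau:ℝ)))) * (rho^(m-i) * (((ll (m-i)):ℝ) * rho^((1-(tau:ℝ))/2)))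
              = (rho^i * rho^(m-i)) * ((((rr i):ℝ) * ((ll (m-i)):ℝ)) * (rho^((tau:ℝ)) * rho^((1-(tau:ℝ))/2))) from by ring,
            ← pow_add, Nat.add_sub_cancel' him, hrpowsum]
      _ = rho ^ m * (((D m):ℝ) * rho ^ ((1+(tau:ℝ))/2)) := by
          rw [hDcast, Finset.sum_mul, Finset.mul_sum]
  -- digit bound for D
  have hXgt : 1 < rho ^ (-(tau:ℝ)) :=
    (Real.one_lt_rpow_iff_of_pos hρpos).mpr (Or.inr ⟨hrho1, by linarith⟩)
  have hYgt : 1 < rho ^ (-((1-(tau:ℝ))/2)) :=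
    (Real.one_lt_rpow_iff_of_pos hρpos).mpr (Or.inr ⟨hrho1, by linarith⟩)
  have hXY : rho ^ (-(tau:ℝ)) * rho ^ (-((1-(tau:ℝ))/2)) = rho ^ (-((1+(tau:ℝ))/2)) := by
    rw [← Real.rpow_add hρpos]
    congr 1
    ring
  have hDle : ∀ m, ((D m):ℝ) ≤ ((m:ℝ)+1) * rho ^ (-((1+(tau:ℝ))/2)) := by
    intro m
    rw [hDcast]
    calc ∑ i ∈ Finset.range (m+1), ((rr i):ℝ) * ((ll (m-i)):ℝ)
        ≤ ∑ i ∈ Finset.range (m+1), rho ^ (-((1+(tau:ℝ))/2)) := by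
          refine Finset.sum_le_sum fun i hi => ?_
          have h1 := hrr i
          have h2 := hlb (m-i)
          have p2 : (0:ℝ) ≤ ((ll (m-i)):ℝ) := Nat.cast_nonneg _
          have hX1 : (0:ℝ) ≤ rho ^ (-(tau:ℝ)) - 1 := by linarith
          calc ((rr i):ℝ) * ((ll (m-i)):ℝ)
              ≤ (rho ^ (-(tau:ℝ)) - 1) * (rho ^ (-((1-(tau:ℝ))/2)) - 1) :=
                mul_le_mul h1 h2 p2 hX1
            _ ≤ rho ^ (-(tau:ℝ)) * rho ^ (-((1-(tau:ℝ))/2)) := by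
                have hr : rho ^ (-(tau:ℝ)) * rho ^ (-((1-(tau:ℝ))/2))
                    - (rho ^ (-(tau:ℝ)) - 1) * (rho ^ (-((1-(tau:ℝ))/2)) - 1)
                    = rho ^ (-(tau:ℝ)) + rho ^ (-((1-(tau:ℝ))/2)) - 1 := by ring
                linarith [hXgt, hYgt]
            _ = rho ^ (-((1+(tau:ℝ))/2)) := hXY
      _ = ((m:ℝ)+1) * rho ^ (-((1+(tau:ℝ))/2)) := by
          rw [Finset.sum_const, Finset.card_range, nsmul_eq_mul]
          push_cast
          ring
  have hαD : ∀ m, ((D m):ℝ) * rho ^ ((1+(tau:ℝ))/2) ≤ (m:ℝ) + 1 := by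
    intro m
    have h1 := hDle m
    have hαpos : (0:ℝ) < rho ^ ((1+(tau:ℝ))/2) := Real.rpow_pos_of_pos hρpos _
    have hmul : rho ^ (-((1+(tau:ℝ))/2)) * rho ^ ((1+(tau:ℝ))/2) = 1 := by
      rw [← Real.rpow_add hρpos]; simp
    calc ((D m):ℝ) * rho ^ ((1+(tau:ℝ))/2)
        ≤ (((m:ℝ)+1) * rho ^ (-((1+(tau:ℝ))/2))) * rho ^ ((1+(tau:ℝ))/2) :=
          mul_le_mul_of_nonneg_right h1 hαpos.le
      _ = ((m:ℝ)+1) * (rho ^ (-((1+(tau:ℝ))/2)) * rho ^ ((1+(tau:ℝ))/2)) := by ring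
      _ = (m:ℝ)+1 := by rw [hmul, mul_one]
  set c : ℕ → ℕ := fun m => kk m + D m with hcdef
  have hccast : ∀ m, ((c m):ℝ) = ((kk m):ℝ) + ((D m):ℝ) := by
    intro m; rw [hcdef]; push_cast; rfl
  have hcle : ∀ m, ((c m):ℝ) * rho ^ ((1+(tau:ℝ))/2) ≤ (m:ℝ) + 2 := by
    intro m
    rw [hccast, add_mul]
    have := hka m
    have := hαD m
    linarith
  have hc0 : ∀ m, (0:ℝ) ≤ ((c m):ℝ) * rho ^ ((1+(tau:ℝ))/2) := fun m => by positivity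
  have hSf : Summable (fun m : ℕ => rho ^ m * (((c m):ℝ) * rho ^ ((1+(tau:ℝ))/2))) :=
    summable_of_digits' hρpos.le hrho1 hc0 hcle
  have hSD : Summable (fun m : ℕ => rho ^ m * (((D m):ℝ) * rho ^ ((1+(tau:ℝ))/2))) :=
    summable_of_digits' hρpos.le hrho1 (fun m => by positivity)
      (fun m => le_trans (hαD m) (by linarith))
  have hx : a + theta * b = ∑' m, rho ^ m * (((c m):ℝ) * rho ^ ((1+(tau:ℝ))/2)) := by
    rw [hak, hcauchy, ← Summable.tsum_add hSa hSD]
    refine tsum_congr fun m => ?_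
    rw [hccast]
    ring
  refine ⟨∑ m ∈ Finset.range (n+1), rho ^ m * (((c m):ℝ) * rho ^ ((1+(tau:ℝ))/2)),
    ⟨c, ?_, rfl⟩, ?_⟩
  · -- digits of h in range
    intro m hm
    rw [e1]
    have h1 := hkk m
    have h2 := hDle m
    have hραpos : (0:ℝ) < rho ^ (-((1+(tau:ℝ))/2)) := Real.rpow_pos_of_pos hρpos _
    have hmn : (m:ℝ) ≤ (n:ℝ) := Nat.cast_le.mpr hm
    have hn2' : (2:ℝ) ≤ (n:ℝ) := by linarith
    rw [hccast]
    have key : ((m:ℝ)+2) * rho ^ (-((1+(tau:ℝ))/2)) ≤ 2*(n:ℝ) * rho ^ (-((1+(tau:ℝ))/2)) := by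
      apply mul_le_mul_of_nonneg_right (by linarith) hραpos.le
    linarith
  · -- distance bound
    rw [hx, ← Summable.sum_add_tsum_nat_add (n+1) hSf, add_sub_cancel_left]
    have hT0 : 0 ≤ ∑' i : ℕ, rho ^ (i+(n+1)) * (((c (i+(n+1))):ℝ) * rho ^ ((1+(tau:ℝ))/2)) :=
      tsum_nonneg fun i => by positivity
    rw [abs_of_nonneg hT0]
    have hnorm : ‖rho‖ < 1 := by rwa [Real.norm_eq_abs, abs_of_nonneg hρpos.le]
    have hS1 : Summable (fun i : ℕ => (i:ℝ) * rho ^ i) := by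
      simpa using summable_pow_mul_geometric_of_norm_lt_one 1 hnorm
    have hS2 : Summable (fun i : ℕ => rho ^ i * ((n:ℝ)+3)) :=
      (summable_geometric_of_lt_one hρpos.le hrho1).mul_right _
    have hSg : Summable (fun i : ℕ => rho^(n+1) * (rho ^ i * ((i:ℝ) + ((n:ℝ)+3)))) := by
      apply Summable.mul_left
      refine Summable.congr (hS1.add hS2) fun i => ?_
      ring
    have hfle : ∀ i, rho ^ (i+(n+1)) * (((c (i+(n+1))):ℝ) * rho ^ ((1+(tau:ℝ))/2))
        ≤ rho^(n+1) * (rho ^ i * ((i:ℝ) + ((n:ℝ)+3))) := by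
      intro i
      have h2 : ((c (i+(n+1))):ℝ) * rho ^ ((1+(tau:ℝ))/2) ≤ (i:ℝ) + ((n:ℝ)+3) := by
        have := hcle (i+(n+1))
        push_cast at this
        linarith
      calc rho ^ (i+(n+1)) * (((c (i+(n+1))):ℝ) * rho ^ ((1+(tau:ℝ))/2))
          = rho^(n+1) * (rho^i * (((c (i+(n+1))):ℝ) * rho ^ ((1+(tau:ℝ))/2))) := by
            rw [pow_add]; ring
        _ ≤ rho^(n+1) * (rho^i * ((i:ℝ) + ((n:ℝ)+3))) := by
            apply mul_le_mul_of_nonneg_left _ (by positivity)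
            apply mul_le_mul_of_nonneg_left h2 (by positivity)
    have hTS : Summable (fun i : ℕ => rho ^ (i+(n+1)) * (((c (i+(n+1))):ℝ) * rho ^ ((1+(tau:ℝ))/2))) := by
      exact (summable_nat_add_iff
        (f := fun m : ℕ => rho ^ m * (((c m):ℝ) * rho ^ ((1+(tau:ℝ))/2))) (n+1)).mpr hSf
    have hTle : ∑' i : ℕ, rho ^ (i+(n+1)) * (((c (i+(n+1))):ℝ) * rho ^ ((1+(tau:ℝ))/2))
        ≤ ∑' i : ℕ, rho^(n+1) * (rho ^ i * ((i:ℝ) + ((n:ℝ)+3))) :=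
      Summable.tsum_le_tsum hfle hTS hSg
    have hgeo : ∑' i : ℕ, rho ^ i = (1-rho)⁻¹ := tsum_geometric_of_lt_one hρpos.le hrho1
    have hlin : ∑' i : ℕ, (i:ℝ) * rho ^ i = rho/(1-rho)^2 :=
      tsum_coe_mul_geometric_of_norm_lt_one hnorm
    have hgval : ∑' i : ℕ, rho^(n+1) * (rho ^ i * ((i:ℝ) + ((n:ℝ)+3)))
        = rho^(n+1) * (rho/(1-rho)^2 + ((1-rho)⁻¹ * ((n:ℝ)+3))) := by
      rw [tsum_mul_left]
      congr 1
      rw [show (fun i : ℕ => rho ^ i * ((i:ℝ) + ((n:ℝ)+3)))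
          = fun i : ℕ => (i:ℝ) * rho ^ i + rho ^ i * ((n:ℝ)+3) from funext fun i => by ring]
      rw [Summable.tsum_add hS1 hS2, hlin, tsum_mul_right, hgeo]
    have hfinal : rho^(n+1) * (rho/(1-rho)^2 + ((1-rho)⁻¹ * ((n:ℝ)+3))) ≤ 6 * delta := by
      have hsq : (15/16:ℝ)^2 ≤ (1-rho)^2 := pow_le_pow_left₀ (by norm_num) (by linarith) 2
      have hb1 : rho/(1-rho)^2 ≤ 2 := by
        rw [div_le_iff₀ (lt_of_lt_of_le (by norm_num) hsq)]
        linarith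
      have hb2 : (1-rho)⁻¹ ≤ 2 := by
        rw [inv_le_comm₀ (by linarith) (by norm_num)]
        linarith
      have hb3 : (1-rho)⁻¹ * ((n:ℝ)+3) ≤ 2 * ((n:ℝ)+3) := by
        apply mul_le_mul_of_nonneg_right hb2 (by positivity)
      have hb4 : rho/(1-rho)^2 + ((1-rho)⁻¹ * ((n:ℝ)+3)) ≤ 2*(n:ℝ) + 8 := by
        have : 4 * rho ≤ 1 := by linarith
        linarith
      have hb5 : rho^(n+1) * (rho/(1-rho)^2 + ((1-rho)⁻¹ * ((n:ℝ)+3)))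
          ≤ rho^(n+1) * (2*(n:ℝ) + 8) := by
        apply mul_le_mul_of_nonneg_left hb4 (by positivity)
      have hb6 : rho^(n+1) * (2*(n:ℝ) + 8) = rho^n * (2*(n:ℝ)*rho + 8*rho) := by
        rw [pow_succ]; ring
      have hb7 : 2*(n:ℝ)*rho + 8*rho ≤ 6 := by linarith
      have hb8 : rho^n * (2*(n:ℝ)*rho + 8*rho) ≤ delta * 6 := by
        apply mul_le_mul hrhon hb7 (by positivity) hdelta0.le
      linarith
    linarith
end
end

section
/- Let 0 < τ < 1 and let ρ ∈ (0, 1/2] be such that ρ^{−1} and ρ^{−τ} are integers ≥ 2. Let ν₀ be the equal-weights self-similar measure on Θ₀ = { Σ_{j=0}^∞ ρ^j · r_j ρ^τ : r_j ∈ ℕ, 0 ≤ r_j ≤ ρ^{−τ} − 1 } (the pushforward of the infinite product of uniform probability measures on {0,…,ρ^{−τ}−1} under (r_j) ↦ Σ_j ρ^j r_j ρ^τ). Let ν̄ be the pushforward of ν₀ under θ ↦ ρ^{−(1+τ)/2}θ, and define ν := ν̄([0,1])^{−1}·ν̄|_{[0,1]}. Then ν̄([0,1]) ≥ ρ^τ,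 ν is a Borel probability measure on [0,1], and there is an absolute constant C > 0 such that ν(B(x,r)) ≤ C·ρ^{τ(τ−1)/2}·r^τ for all x ∈ ℝ and all r > 0. -/
open MeasureTheory Metric Set Real
open scoped ENNReal NNReal

noncomputable section

/-- The support of a Borel measure on a metric space: the set of points all of whose
neighbourhoods have positive measure. -/
def msupport {X : Type*} [MeasurableSpace X] [PseudoMetricSpace X] (mu : Measure X) : Set X :=
  {x : X | forall r : Real, 0 < r -> 0 < mu (Metric.ball x r)}

/-- A measure is Ahlfors `(s, C)`-regular if `C^-1 * r^s <= mu (B(x,r)) <= C * r^s` for all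
`x` in the support of `mu` and all `0 < r <= diam (supp mu)`. -/
def IsAhlforsRegular {X : Type*} [MeasurableSpace X] [PseudoMetricSpace X]
    (mu : Measure X) (s C : Real) : Prop :=
  forall x, x ∈ msupport mu -> forall r : Real, 0 < r -> r <= Metric.diam (msupport mu) ->
    ENNReal.ofReal (C⁻¹ * r ^ s) <= mu (Metric.closedBall x r) ∧
      mu (Metric.closedBall x r) <= ENNReal.ofReal (C * r ^ s)


lemma map_finset_sum_meas {ι : Type*} (s : Finset ι) (μ : ι → Measure ℝ) {f : ℝ → ℝ}
    (hf : Measurable f) :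
    Measure.map f (∑ i ∈ s, μ i) = ∑ i ∈ s, Measure.map f (μ i) := by
  classical
  induction s using Finset.induction with
  | empty => simp
  | insert _ _ hx ih =>
      rw [Finset.sum_insert hx, Measure.map_add _ _ hf, ih, Finset.sum_insert hx]

lemma meas_aff (a b : ℝ) : Measurable (fun x : ℝ => a * x + b) :=
  (measurable_id.const_mul a).add_const b

/-- iterated self-similarity -/
lemma iterate_self (tau rho : ℝ) (M : ℕ) (nu0 : Measure ℝ)
    (hself : nu0 = (M : ENNReal)⁻¹ •
        ∑ j ∈ Finset.range M,
          Measure.map (fun x : Real => rho * x + (j : Real) * rho ^ tau) nu0) (k : ℕ) :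
    nu0 = ((M : ENNReal) ^ k)⁻¹ •
      ∑ w : Fin k → Fin M,
        Measure.map (fun x : ℝ =>
          rho ^ k * x + rho ^ tau * ∑ i : Fin k, rho ^ (i : ℕ) * ((w i : ℕ) : ℝ)) nu0 := by
  induction k with
  | zero =>
      simp only [pow_zero, inv_one, one_smul]
      rw [Fintype.sum_unique]
      simp [Measure.map_id]
  | succ k ih =>
      conv_lhs => rw [hself]
      have step : ∀ j ∈ Finset.range M,
          Measure.map (fun x : Real => rho * x + (j : Real) * rho ^ tau) nu0
            = ((M : ENNReal) ^ k)⁻¹ • ∑ w : Fin k → Fin M,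
              Measure.map (fun x : ℝ =>
                rho ^ (k+1) * x + rho ^ tau *
                  ((j:ℝ) + ∑ i : Fin k, rho ^ ((i : ℕ)+1) * ((w i : ℕ) : ℝ))) nu0 := by
        intro j hj
        conv_lhs => rw [ih]
        rw [Measure.map_smul, map_finset_sum_meas _ _ (meas_aff _ _)]
        congr 1
        refine Finset.sum_congr rfl fun w _ => ?_
        rw [Measure.map_map (meas_aff _ _) (meas_aff _ _)]
        congr 1
        funext x
        simp only [Function.comp_apply]
        have hs : ∑ i : Fin k, rho ^ ((i:ℕ)+1) * ((w i : ℕ):ℝ)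
            = rho * ∑ i : Fin k, rho ^ (i:ℕ) * ((w i : ℕ):ℝ) := by
          rw [Finset.mul_sum]; exact Finset.sum_congr rfl fun i _ => by ring
        rw [hs]; ring
      rw [Finset.sum_congr rfl step, ← Finset.smul_sum, smul_smul, ← Fin.sum_univ_eq_sum_range
        (fun j => ∑ w : Fin k → Fin M,
              Measure.map (fun x : ℝ =>
                rho ^ (k+1) * x + rho ^ tau *
                  ((j:ℝ) + ∑ i : Fin k, rho ^ ((i : ℕ)+1) * ((w i : ℕ) : ℝ))) nu0) M]
      congr 1
      · rw [pow_succ, ENNReal.mul_inv (Or.inr (ENNReal.natCast_ne_top M))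
          (Or.inl (ENNReal.pow_ne_top (ENNReal.natCast_ne_top M)))]
        ring
      · refine (Fintype.sum_prod_type (f := fun p : Fin M × (Fin k → Fin M) =>
          Measure.map (fun x : ℝ => rho ^ (k+1) * x + rho ^ tau *
            (((p.1 : ℕ):ℝ) + ∑ i : Fin k, rho ^ ((i : ℕ)+1) * ((p.2 i : ℕ) : ℝ))) nu0)).symm.trans ?_
        refine Fintype.sum_equiv (Fin.consEquiv fun _ => Fin M) _ _ ?_
        rintro ⟨j, w⟩
        congr 1
        funext x
        simp only [Fin.consEquiv_apply, Fin.sum_univ_succ, Fin.cons_zero, Fin.cons_succ,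
          Fin.val_zero, pow_zero, one_mul, Fin.val_succ]

section Support

open Filter

variable {tau rho : ℝ} {M : ℕ} {nu0 : Measure ℝ}

/-- abbreviation for the translation part -/
def bw (rho tau : ℝ) (M : ℕ) (k : ℕ) (w : Fin k → Fin M) : ℝ :=
  rho ^ tau * ∑ i : Fin k, rho ^ (i : ℕ) * ((w i : ℕ) : ℝ)

lemma bw_nonneg (hr0 : 0 < rho) (k : ℕ) (w : Fin k → Fin M) : 0 ≤ bw rho tau M k w := by
  apply mul_nonneg (Real.rpow_nonneg hr0.le tau)
  exact Finset.sum_nonneg fun i _ => mul_nonneg (pow_nonneg hr0.le _) (Nat.cast_nonneg _)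

lemma bw_le (ht0 : 0 < tau) (ht1 : tau < 1) (hr0 : 0 < rho) (hr2 : rho ≤ 1/2)
    (hM : (M : ℝ) = rho ^ (-tau)) (k : ℕ) (w : Fin k → Fin M) :
    bw rho tau M k w ≤ (1 - rho ^ tau) / (1 - rho) := by
  have hr1 : rho < 1 := by linarith
  have hpos : (0:ℝ) < rho ^ tau := Real.rpow_pos_of_pos hr0 tau
  have hMrt : (M : ℝ) * rho ^ tau = 1 := by
    rw [hM, Real.rpow_neg hr0.le, inv_mul_cancel₀ (ne_of_gt hpos)]
  have h1 : bw rho tau M k w ≤ rho ^ tau * (((M:ℝ) - 1) * ∑ i ∈ Finset.range k, rho ^ i) := by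
    unfold bw
    apply mul_le_mul_of_nonneg_left _ hpos.le
    rw [Finset.mul_sum, ← Fin.sum_univ_eq_sum_range (fun i => ((M:ℝ)-1) * rho ^ i) k]
    apply Finset.sum_le_sum
    intro i _
    have hwi : ((w i : ℕ) : ℝ) ≤ (M:ℝ) - 1 := by
      have := (w i).isLt
      have : ((w i : ℕ) : ℝ) ≤ (M:ℝ) - 1 := by
        have h := Nat.lt_iff_add_one_le.mp (w i).isLt
        have := Nat.cast_le (α := ℝ) |>.mpr h
        push_cast at this
        linarith
      exact this
    calc rho ^ (i:ℕ) * ((w i : ℕ):ℝ) ≤ rho ^ (i:ℕ) * ((M:ℝ)-1) :=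
          mul_le_mul_of_nonneg_left hwi (pow_nonneg hr0.le _)
      _ = ((M:ℝ)-1) * rho ^ (i:ℕ) := by ring
  have h2 : ∑ i ∈ Finset.range k, rho ^ i ≤ 1 / (1 - rho) := by
    rw [geom_sum_eq (ne_of_lt hr1) k,
      show rho ^ k - 1 = -(1 - rho ^ k) by ring, show rho - 1 = -(1 - rho) by ring,
      neg_div_neg_eq]
    have hpk : (0:ℝ) ≤ rho ^ k := pow_nonneg hr0.le k
    gcongr
    · linarith
  have hM1 : (0:ℝ) ≤ (M:ℝ) - 1 := by
    have : (1:ℝ) ≤ M := by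
      rw [hM]
      have : rho ^ (-tau) ≥ rho ^ (0:ℝ) := Real.rpow_le_rpow_of_exponent_ge hr0 hr1.le (by linarith)
      simpa using this
    linarith
  calc bw rho tau M k w ≤ rho ^ tau * (((M:ℝ) - 1) * (1/(1-rho))) := by
        refine h1.trans ?_
        exact mul_le_mul_of_nonneg_left (mul_le_mul_of_nonneg_left h2 hM1) hpos.le
    _ = (1 - rho ^ tau) / (1 - rho) := by
        have hkey : rho ^ tau * ((M:ℝ)-1) = 1 - rho ^ tau := by ring_nf; linarith [hMrt]
        rw [show rho ^ tau*(((M:ℝ)-1)*(1/(1-rho))) = (rho ^ tau*((M:ℝ)-1)) * (1/(1-rho)) by ring,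
          hkey, mul_one_div]

lemma S_lt_one (ht0 : 0 < tau) (ht1 : tau < 1) (hr0 : 0 < rho) (hr2 : rho ≤ 1/2) :
    (1 - rho ^ tau) / (1 - rho) < 1 := by
  have hr1 : rho < 1 := by linarith
  have h : rho < rho ^ tau := by
    calc rho = rho ^ (1:ℝ) := (Real.rpow_one rho).symm
      _ < rho ^ tau := Real.rpow_lt_rpow_of_exponent_gt hr0 hr1 ht1
  rw [div_lt_one (by linarith)]
  linarith

/-- applying the iteration to a measurable set -/
lemma measure_eq_iter (ht0 : 0 < tau)
    (hself : nu0 = (M : ENNReal)⁻¹ •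
        ∑ j ∈ Finset.range M,
          Measure.map (fun x : Real => rho * x + (j : Real) * rho ^ tau) nu0)
    (k : ℕ) {E : Set ℝ} (hE : MeasurableSet E) :
    nu0 E = ((M : ENNReal) ^ k)⁻¹ *
      ∑ w : Fin k → Fin M, nu0 ((fun x : ℝ => rho ^ k * x + bw rho tau M k w) ⁻¹' E) := by
  conv_lhs => rw [iterate_self tau rho M nu0 hself k]
  rw [Measure.smul_apply, Measure.finset_sum_apply]
  simp only [smul_eq_mul]
  congr 1
  refine Finset.sum_congr rfl fun w _ => ?_
  exact Measure.map_apply (meas_aff _ _) hE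

end Support

section Tails
open Filter

variable {tau rho : ℝ} {M : ℕ} {nu0 : Measure ℝ}

lemma tail_right (ht0 : 0 < tau) (ht1 : tau < 1) (hr0 : 0 < rho) (hr2 : rho ≤ 1/2)
    (hM2 : 2 ≤ M) (hM : (M : ℝ) = rho ^ (-tau)) (hprob : IsProbabilityMeasure nu0)
    (hself : nu0 = (M : ENNReal)⁻¹ •
        ∑ j ∈ Finset.range M,
          Measure.map (fun x : Real => rho * x + (j : Real) * rho ^ tau) nu0) :
    nu0 (Set.Ioi (1:ℝ)) = 0 := by
  have hr1 : rho < 1 := by linarith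
  set S : ℝ := (1 - rho ^ tau) / (1 - rho) with hS
  have hS1 : S < 1 := S_lt_one ht0 ht1 hr0 hr2
  set t : ℕ → ℝ := fun k => (1 - S) * (rho⁻¹) ^ k with ht
  have hMk0 : ∀ k : ℕ, ((M : ENNReal) ^ k) ≠ 0 :=
    fun k => pow_ne_zero k (Nat.cast_ne_zero.mpr (by omega))
  have hMkt : ∀ k : ℕ, ((M : ENNReal) ^ k) ≠ ⊤ :=
    fun k => ENNReal.pow_ne_top (ENNReal.natCast_ne_top M)
  have key : ∀ k : ℕ, nu0 (Set.Ioi (1:ℝ)) ≤ nu0 (Set.Ioi (t k)) := by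
    intro k
    rw [measure_eq_iter ht0 hself k measurableSet_Ioi]
    have hterm : ∀ w : Fin k → Fin M,
        nu0 ((fun x : ℝ => rho ^ k * x + bw rho tau M k w) ⁻¹' Set.Ioi 1)
          ≤ nu0 (Set.Ioi (t k)) := by
      intro w
      apply measure_mono
      intro x hx
      simp only [Set.mem_preimage, Set.mem_Ioi] at hx ⊢
      have hb := bw_le ht0 ht1 hr0 hr2 hM k w
      have hpk : (0:ℝ) < rho ^ k := pow_pos hr0 k
      rw [ht]
      have : (1 - S) < rho ^ k * x := by nlinarith
      calc (1-S) * (rho⁻¹)^k = (1-S) / rho ^ k := by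
            rw [inv_pow, div_eq_mul_inv]
        _ < x := by rw [div_lt_iff₀ hpk]; nlinarith
    calc ((M : ENNReal) ^ k)⁻¹ *
        ∑ w : Fin k → Fin M, nu0 ((fun x : ℝ => rho ^ k * x + bw rho tau M k w) ⁻¹' Set.Ioi 1)
        ≤ ((M : ENNReal) ^ k)⁻¹ * ∑ _w : Fin k → Fin M, nu0 (Set.Ioi (t k)) := by
          exact mul_le_mul_right (Finset.sum_le_sum fun w _ => hterm w) _
      _ = ((M : ENNReal) ^ k)⁻¹ * ((M : ENNReal) ^ k * nu0 (Set.Ioi (t k))) := by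
          rw [Finset.sum_const, Finset.card_univ, Fintype.card_fun]
          simp [nsmul_eq_mul]
      _ = nu0 (Set.Ioi (t k)) := by
          rw [← mul_assoc, ENNReal.inv_mul_cancel (hMk0 k) (hMkt k), one_mul]
  have htmono : Monotone t := by
    intro a b hab
    have h1 : (1:ℝ) ≤ rho⁻¹ := by
      rw [le_inv_comm₀]
      · linarith
      · norm_num
      · exact hr0
    exact mul_le_mul_of_nonneg_left (pow_le_pow_right₀ h1 hab) (by linarith)
  have htend : Tendsto t atTop atTop := by
    rw [ht]
    apply (tendsto_const_mul_atTop_of_pos (by linarith : (0:ℝ) < 1 - S)).mpr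
    exact tendsto_pow_atTop_atTop_of_one_lt (by rw [lt_inv_comm₀] <;> [skip; norm_num; exact hr0] <;> linarith)
  have hanti : Antitone fun k => Set.Ioi (t k) := fun a b hab => Set.Ioi_subset_Ioi (htmono hab)
  have hempty : (⋂ k, Set.Ioi (t k)) = ∅ := by
    ext x
    simp only [Set.mem_iInter, Set.mem_Ioi, Set.mem_empty_iff_false, iff_false, not_forall, not_lt]
    exact (htend.eventually_ge_atTop x).exists
  have hlim := tendsto_measure_iInter_atTop
    (μ := nu0) (s := fun k => Set.Ioi (t k))
    (fun k => measurableSet_Ioi.nullMeasurableSet) hanti ⟨0, measure_ne_top _ _⟩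
  rw [hempty] at hlim
  simpa using ge_of_tendsto' hlim key

end Tails

section Tails2
open Filter

variable {tau rho : ℝ} {M : ℕ} {nu0 : Measure ℝ}

lemma tail_left (ht0 : 0 < tau) (ht1 : tau < 1) (hr0 : 0 < rho) (hr2 : rho ≤ 1/2)
    (hM2 : 2 ≤ M) (hM : (M : ℝ) = rho ^ (-tau))
    (hself : nu0 = (M : ENNReal)⁻¹ •
        ∑ j ∈ Finset.range M,
          Measure.map (fun x : Real => rho * x + (j : Real) * rho ^ tau) nu0)
    [IsFiniteMeasure nu0] {u : ℝ} (hu : u < 0) :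
    nu0 (Set.Iio u) = 0 := by
  have hr1 : rho < 1 := by linarith
  set t : ℕ → ℝ := fun k => u * (rho⁻¹) ^ k with ht
  have hMk0 : ∀ k : ℕ, ((M : ENNReal) ^ k) ≠ 0 :=
    fun k => pow_ne_zero k (Nat.cast_ne_zero.mpr (by omega))
  have hMkt : ∀ k : ℕ, ((M : ENNReal) ^ k) ≠ ⊤ :=
    fun k => ENNReal.pow_ne_top (ENNReal.natCast_ne_top M)
  have hrinv : (1:ℝ) < rho⁻¹ := by
    rw [lt_inv_comm₀] <;> [skip; norm_num; exact hr0] <;> linarith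
  have key : ∀ k : ℕ, nu0 (Set.Iio u) ≤ nu0 (Set.Iio (t k)) := by
    intro k
    rw [measure_eq_iter ht0 hself k measurableSet_Iio]
    have hterm : ∀ w : Fin k → Fin M,
        nu0 ((fun x : ℝ => rho ^ k * x + bw rho tau M k w) ⁻¹' Set.Iio u)
          ≤ nu0 (Set.Iio (t k)) := by
      intro w
      apply measure_mono
      intro x hx
      simp only [Set.mem_preimage, Set.mem_Iio] at hx ⊢
      have hb := bw_nonneg (tau := tau) hr0 k w
      have hpk : (0:ℝ) < rho ^ k := pow_pos hr0 k
      rw [ht]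
      calc x < (u - bw rho tau M k w) / rho ^ k := by
            rw [lt_div_iff₀ hpk]; nlinarith
        _ ≤ u / rho ^ k := by
            gcongr
            · linarith
        _ = u * (rho⁻¹)^k := by rw [inv_pow, div_eq_mul_inv]
    calc ((M : ENNReal) ^ k)⁻¹ *
        ∑ w : Fin k → Fin M, nu0 ((fun x : ℝ => rho ^ k * x + bw rho tau M k w) ⁻¹' Set.Iio u)
        ≤ ((M : ENNReal) ^ k)⁻¹ * ∑ _w : Fin k → Fin M, nu0 (Set.Iio (t k)) := by
          exact mul_le_mul_right (Finset.sum_le_sum fun w _ => hterm w) _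
      _ = ((M : ENNReal) ^ k)⁻¹ * ((M : ENNReal) ^ k * nu0 (Set.Iio (t k))) := by
          rw [Finset.sum_const, Finset.card_univ, Fintype.card_fun]
          simp [nsmul_eq_mul]
      _ = nu0 (Set.Iio (t k)) := by
          rw [← mul_assoc, ENNReal.inv_mul_cancel (hMk0 k) (hMkt k), one_mul]
  have htanti : Antitone t := by
    intro a b hab
    have h := pow_le_pow_right₀ hrinv.le hab
    exact mul_le_mul_of_nonpos_left h hu.le
  have htend : Tendsto t atTop atBot := by
    rw [ht]
    exact (tendsto_const_mul_atBot_of_neg hu).mpr (tendsto_pow_atTop_atTop_of_one_lt hrinv)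
  have hanti : Antitone fun k => Set.Iio (t k) := fun a b hab => Set.Iio_subset_Iio (htanti hab)
  have hempty : (⋂ k, Set.Iio (t k)) = ∅ := by
    ext x
    simp only [Set.mem_iInter, Set.mem_Iio, Set.mem_empty_iff_false, iff_false, not_forall, not_lt]
    exact (htend.eventually_le_atBot x).exists
  have hlim := tendsto_measure_iInter_atTop
    (μ := nu0) (s := fun k => Set.Iio (t k))
    (fun k => measurableSet_Iio.nullMeasurableSet) hanti ⟨0, measure_ne_top _ _⟩
  rw [hempty] at hlim
  simpa using ge_of_tendsto' hlim key

lemma icc_conull (ht0 : 0 < tau) (ht1 : tau < 1) (hr0 : 0 < rho) (hr2 : rho ≤ 1/2)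
    (hM2 : 2 ≤ M) (hM : (M : ℝ) = rho ^ (-tau)) (hprob : IsProbabilityMeasure nu0)
    (hself : nu0 = (M : ENNReal)⁻¹ •
        ∑ j ∈ Finset.range M,
          Measure.map (fun x : Real => rho * x + (j : Real) * rho ^ tau) nu0) :
    nu0 (Set.Icc (0:ℝ) 1)ᶜ = 0 := by
  have hIio : nu0 (Set.Iio (0:ℝ)) = 0 := by
    have hsub : Set.Iio (0:ℝ) ⊆ ⋃ n : ℕ, Set.Iio (-(1/((n:ℝ)+1))) := by
      intro x hx
      simp only [Set.mem_Iio] at hx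
      obtain ⟨n, hn⟩ := exists_nat_one_div_lt (show (0:ℝ) < -x by linarith)
      exact Set.mem_iUnion.mpr ⟨n, by simp only [Set.mem_Iio]; linarith⟩
    refine le_antisymm ?_ zero_le
    calc nu0 (Set.Iio (0:ℝ)) ≤ nu0 (⋃ n : ℕ, Set.Iio (-(1/((n:ℝ)+1)))) := measure_mono hsub
      _ ≤ ∑' n : ℕ, nu0 (Set.Iio (-(1/((n:ℝ)+1)))) := measure_iUnion_le _
      _ = 0 := by
          have hz : ∀ n : ℕ, nu0 (Set.Iio (-(1/((n:ℝ)+1)))) = 0 := by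
            intro n
            apply tail_left ht0 ht1 hr0 hr2 hM2 hM hself
            have : (0:ℝ) < 1/((n:ℝ)+1) := by positivity
            linarith
          rw [tsum_congr hz, tsum_zero]
  have hIoi : nu0 (Set.Ioi (1:ℝ)) = 0 := tail_right ht0 ht1 hr0 hr2 hM2 hM hprob hself
  have hcompl : (Set.Icc (0:ℝ) 1)ᶜ = Set.Iio 0 ∪ Set.Ioi 1 := by
    ext x
    simp only [Set.mem_compl_iff, Set.mem_Icc, Set.mem_union, Set.mem_Iio, Set.mem_Ioi]
    constructor
    · intro h; by_contra hc; push_neg at hc; exact h ⟨hc.1, hc.2⟩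
    · rintro (h | h) ⟨h0, h1⟩ <;> linarith
  rw [hcompl]
  refine le_antisymm ?_ zero_le
  calc nu0 (Set.Iio 0 ∪ Set.Ioi 1) ≤ nu0 (Set.Iio 0) + nu0 (Set.Ioi 1) := measure_union_le _ _
    _ = 0 := by rw [hIio, hIoi, add_zero]

end Tails2

section Counting

variable {tau rho : ℝ} {M N : ℕ} {nu0 : Measure ℝ}

/-- digit value of a word -/
def psiw (M N k : ℕ) (w : Fin k → Fin M) : ℕ :=
  ∑ i : Fin k, (w i : ℕ) * N ^ (k - 1 - (i : ℕ))

lemma psiw_inj (hMN : M ≤ N) (k : ℕ) : Function.Injective (psiw M N k) := by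
  have hrepr : ∀ w : Fin k → Fin M,
      psiw M N k w = ((finFunctionFinEquiv (fun i : Fin k => Fin.castLE hMN (w i.rev))) : ℕ) := by
    intro w
    rw [finFunctionFinEquiv_apply]
    unfold psiw
    refine Fintype.sum_equiv (Fin.revPerm) _ _ ?_
    intro i
    simp only [Fin.revPerm_apply, Fin.coe_castLE, Fin.rev_rev, Fin.val_rev]
    congr 2
    omega
  intro w w' h
  rw [hrepr w, hrepr w'] at h
  have h2 := finFunctionFinEquiv.injective (Fin.val_injective h)
  funext j
  have h3 := congrFun h2 j.rev
  simp only [Fin.rev_rev] at h3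
  exact Fin.castLE_injective hMN h3

lemma bw_eq_psiw (hr0 : 0 < rho) (hN : (N : ℝ) = rho⁻¹) (k : ℕ) (hk : 1 ≤ k)
    (w : Fin k → Fin M) :
    bw rho tau M k w = rho ^ tau * rho ^ (k-1) * (psiw M N k w : ℝ) := by
  unfold bw psiw
  push_cast
  rw [mul_assoc]
  congr 1
  rw [Finset.mul_sum]
  refine Finset.sum_congr rfl fun i _ => ?_
  have hkey : rho ^ (k-1) * (rho ^ (k-1-(i:ℕ)))⁻¹ = rho ^ (i:ℕ) := by
    have h := pow_sub₀ rho hr0.ne' (show k-1-(i:ℕ) ≤ k-1 by omega)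
    rw [show (k-1) - (k-1-(i:ℕ)) = (i:ℕ) by omega] at h
    exact h.symm
  rw [hN, inv_pow, ← hkey]
  ring

lemma card_filter_bound (ht0 : 0 < tau) (hr0 : 0 < rho) (hN : (N : ℝ) = rho⁻¹)
    (hMN : M ≤ N) (k : ℕ) (hk : 1 ≤ k) (α β : ℝ) (hαβ : α ≤ β) :
    ((Finset.univ.filter
        (fun w : Fin k → Fin M => α ≤ bw rho tau M k w ∧ bw rho tau M k w ≤ β)).card : ℝ)
      ≤ (β - α) / (rho ^ tau * rho ^ (k-1)) + 1 := by
  set δ : ℝ := rho ^ tau * rho ^ (k-1) with hδ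
  have hδpos : 0 < δ := mul_pos (Real.rpow_pos_of_pos hr0 tau) (pow_pos hr0 _)
  have hcard : (Finset.univ.filter
      (fun w : Fin k → Fin M => α ≤ bw rho tau M k w ∧ bw rho tau M k w ≤ β)).card
        ≤ (Finset.Icc ⌈α/δ⌉ ⌊β/δ⌋).card := by
    apply Finset.card_le_card_of_injOn (fun w => (psiw M N k w : ℤ))
    · intro w hw
      simp only [Finset.mem_coe, Finset.mem_filter] at hw ⊢
      obtain ⟨-, h1, h2⟩ := hw
      rw [bw_eq_psiw hr0 hN k hk w] at h1 h2
      rw [Finset.mem_Icc]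
      constructor
      · rw [Int.ceil_le]
        push_cast
        rw [div_le_iff₀ hδpos]
        nlinarith
      · rw [Int.le_floor]
        push_cast
        rw [le_div_iff₀ hδpos]
        nlinarith
    · intro w _ w' _ h
      have hb : (psiw M N k w : ℤ) = (psiw M N k w' : ℤ) := h
      have h' : psiw M N k w = psiw M N k w' := by exact_mod_cast hb
      exact psiw_inj hMN k h'
  have hIcc : ((Finset.Icc ⌈α/δ⌉ ⌊β/δ⌋).card : ℝ) ≤ (β - α)/δ + 1 := by
    rcases le_or_gt ⌈α/δ⌉ ⌊β/δ⌋ with hle | hlt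
    · rw [Int.card_Icc]
      have hnn : (0:ℤ) ≤ ⌊β/δ⌋ + 1 - ⌈α/δ⌉ := by omega
      have hcast : (((⌊β/δ⌋ + 1 - ⌈α/δ⌉).toNat : ℕ) : ℝ) = ((⌊β/δ⌋:ℝ) + 1 - (⌈α/δ⌉:ℝ)) := by
        have := Int.toNat_of_nonneg hnn
        have h2 : (((⌊β/δ⌋ + 1 - ⌈α/δ⌉).toNat : ℤ) : ℝ) = ((⌊β/δ⌋ + 1 - ⌈α/δ⌉ : ℤ) : ℝ) := by
          rw [this]
        push_cast at h2
        exact h2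
      rw [hcast]
      have h1 : ((⌊β/δ⌋ : ℝ)) ≤ β/δ := Int.floor_le _
      have h2 : α/δ ≤ ((⌈α/δ⌉ : ℝ)) := Int.le_ceil _
      have h3 : (β - α)/δ = β/δ - α/δ := by ring
      linarith
    · rw [Finset.Icc_eq_empty (not_le.mpr hlt)]
      simp only [Finset.card_empty, Nat.cast_zero]
      have : 0 ≤ (β - α)/δ := div_nonneg (by linarith) hδpos.le
      linarith
  calc ((Finset.univ.filter
        (fun w : Fin k → Fin M => α ≤ bw rho tau M k w ∧ bw rho tau M k w ≤ β)).card : ℝ)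
      ≤ ((Finset.Icc ⌈α/δ⌉ ⌊β/δ⌋).card : ℝ) := by exact_mod_cast hcard
    _ ≤ (β - α)/δ + 1 := hIcc

end Counting

section MainBound

variable {tau rho : ℝ} {M : ℕ} {nu0 : Measure ℝ}

lemma nu0_closedBall (ht0 : 0 < tau) (ht1 : tau < 1) (hr0 : 0 < rho) (hr2 : rho ≤ 1/2)
    (hNex : ∃ N : ℕ, 2 ≤ N ∧ (N : ℝ) = rho⁻¹)
    (hM2 : 2 ≤ M) (hM : (M : ℝ) = rho ^ (-tau)) (hprob : IsProbabilityMeasure nu0)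
    (hself : nu0 = (M : ENNReal)⁻¹ •
        ∑ j ∈ Finset.range M,
          Measure.map (fun x : Real => rho * x + (j : Real) * rho ^ tau) nu0)
    (c s : ℝ) (hs : 0 < s) :
    nu0 (Metric.closedBall c s) ≤ ENNReal.ofReal (3 * (2*s) ^ tau) := by
  obtain ⟨N, hN2, hNr⟩ := hNex
  have hr1 : rho < 1 := by linarith
  have hρτ : (0:ℝ) < rho ^ tau := Real.rpow_pos_of_pos hr0 tau
  have hMrt : (M : ℝ) * rho ^ tau = 1 := by
    rw [hM, Real.rpow_neg hr0.le, inv_mul_cancel₀ (ne_of_gt hρτ)]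
  have hMN : M ≤ N := by
    have h1 : (M:ℝ) < (N:ℝ) := by
      rw [hM, hNr, ← Real.rpow_neg_one rho]
      exact Real.rpow_lt_rpow_of_exponent_gt hr0 hr1 (by linarith)
    exact_mod_cast h1.le
  set L : ℝ := 2 * s with hL
  have hL0 : 0 < L := by positivity
  rcases le_or_gt 1 L with hL1 | hL1
  · -- big radius : trivial bound
    have h1 : (1:ℝ) ≤ (2*s) ^ tau := Real.one_le_rpow hL1 ht0.le
    calc nu0 (Metric.closedBall c s) ≤ nu0 Set.univ := measure_mono (Set.subset_univ _)
      _ = 1 := measure_univ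
      _ ≤ ENNReal.ofReal (3 * (2*s) ^ tau) := by
          have h2 : (1:ℝ≥0∞) = ENNReal.ofReal 1 := by simp
          rw [h2]
          exact ENNReal.ofReal_le_ofReal (by linarith)
  · -- small radius
    have hex : ∃ n : ℕ, rho ^ n < L := exists_pow_lt_of_lt_one hL0 hr1
    set K := Nat.find hex with hK
    have hKlt : rho ^ K < L := Nat.find_spec hex
    have hK0 : K ≠ 0 := by
      intro h0
      rw [h0, pow_zero] at hKlt
      linarith
    obtain ⟨m, hm⟩ : ∃ m, K = m + 1 := ⟨K - 1, by omega⟩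
    have hLle : L ≤ rho ^ m := by
      by_contra hcon
      push_neg at hcon
      exact Nat.find_min hex (by omega : m < K) hcon
    rw [hm] at hKlt
    have hconull : nu0 (Set.Icc (0:ℝ) 1)ᶜ = 0 :=
      icc_conull ht0 ht1 hr0 hr2 hM2 hM hprob hself
    -- decompose with k = m+1
    have hiter := measure_eq_iter (M := M) (nu0 := nu0) ht0 hself (m+1)
      (measurableSet_closedBall (x := c) (ε := s))
    set P : (Fin (m+1) → Fin M) → Prop :=
      fun w => c - s - rho ^ (m+1) ≤ bw rho tau M (m+1) w ∧ bw rho tau M (m+1) w ≤ c + s with hP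
    have hzero : ∀ w : Fin (m+1) → Fin M, ¬ P w →
        nu0 ((fun x : ℝ => rho ^ (m+1) * x + bw rho tau M (m+1) w) ⁻¹' Metric.closedBall c s)
          = 0 := by
      intro w hw
      rw [← measure_inter_conull (t := Set.Icc (0:ℝ) 1) hconull]
      convert measure_empty (μ := nu0)
      ext x
      simp only [Set.mem_inter_iff, Set.mem_preimage, Metric.mem_closedBall, Set.mem_Icc,
        Set.mem_empty_iff_false, iff_false]
      rintro ⟨hball, hx0, hx1⟩
      apply hw
      rw [Real.dist_eq, abs_le] at hball
      have hpk : (0:ℝ) < rho ^ (m+1) := pow_pos hr0 _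
      constructor
      · nlinarith [hball.1]
      · nlinarith [hball.2]
    have hone : ∀ w : Fin (m+1) → Fin M,
        nu0 ((fun x : ℝ => rho ^ (m+1) * x + bw rho tau M (m+1) w) ⁻¹' Metric.closedBall c s)
          ≤ 1 := fun w => prob_le_one
    classical
    set T : Finset (Fin (m+1) → Fin M) := Finset.univ.filter P with hT
    have hsum : ∑ w : Fin (m+1) → Fin M,
        nu0 ((fun x : ℝ => rho ^ (m+1) * x + bw rho tau M (m+1) w) ⁻¹' Metric.closedBall c s)
          ≤ (T.card : ℝ≥0∞) := by
      rw [← Finset.sum_filter_add_sum_filter_not Finset.univ P]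
      have h2 : ∑ w ∈ Finset.univ.filter (fun w => ¬ P w),
          nu0 ((fun x : ℝ => rho ^ (m+1) * x + bw rho tau M (m+1) w) ⁻¹' Metric.closedBall c s)
            = 0 := by
        apply Finset.sum_eq_zero
        intro w hw
        simp only [Finset.mem_filter] at hw
        exact hzero w hw.2
      rw [h2, add_zero]
      calc ∑ w ∈ T,
          nu0 ((fun x : ℝ => rho ^ (m+1) * x + bw rho tau M (m+1) w) ⁻¹' Metric.closedBall c s)
            ≤ ∑ _w ∈ T, (1:ℝ≥0∞) := Finset.sum_le_sum fun w _ => hone w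
        _ = (T.card : ℝ≥0∞) := by simp
    -- card bound
    have hcardR : ((T.card : ℕ) : ℝ) ≤ (L + rho ^ (m+1)) / (rho ^ tau * rho ^ m) + 1 := by
      have := card_filter_bound (M := M) ht0 hr0 hNr hMN (m+1) (by omega)
        (c - s - rho ^ (m+1)) (c + s) (by nlinarith [pow_pos hr0 (m+1)])
      simp only [Nat.add_sub_cancel] at this
      calc ((T.card : ℕ) : ℝ) ≤ ((c+s) - (c - s - rho^(m+1))) / (rho ^ tau * rho ^ m) + 1 := this
        _ = (L + rho ^ (m+1)) / (rho ^ tau * rho ^ m) + 1 := by rw [hL]; ring_nf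
    -- ENNReal manipulations
    have hMinv : ((M : ℝ≥0∞))⁻¹ = ENNReal.ofReal (rho ^ tau) := by
      have hM0 : (0:ℝ) < (M:ℝ) := by positivity
      rw [← ENNReal.ofReal_natCast M, ← ENNReal.ofReal_inv_of_pos hM0]
      congr 1
      exact inv_eq_of_mul_eq_one_right hMrt
    have hMkinv : (((M : ℝ≥0∞)) ^ (m+1))⁻¹ = ENNReal.ofReal ((rho ^ tau) ^ (m+1)) := by
      rw [ENNReal.inv_pow, hMinv, ← ENNReal.ofReal_pow hρτ.le]
    rw [hiter]
    calc ((M : ℝ≥0∞) ^ (m+1))⁻¹ * ∑ w : Fin (m+1) → Fin M,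
        nu0 ((fun x : ℝ => rho ^ (m+1) * x + bw rho tau M (m+1) w) ⁻¹' Metric.closedBall c s)
        ≤ ((M : ℝ≥0∞) ^ (m+1))⁻¹ * (T.card : ℝ≥0∞) := mul_le_mul_right hsum _
      _ = ENNReal.ofReal ((rho ^ tau) ^ (m+1)) * ENNReal.ofReal ((T.card : ℕ) : ℝ) := by
          rw [hMkinv, ENNReal.ofReal_natCast]
      _ = ENNReal.ofReal ((rho ^ tau) ^ (m+1) * ((T.card : ℕ) : ℝ)) := by
          rw [ENNReal.ofReal_mul (by positivity)]
      _ ≤ ENNReal.ofReal (3 * (2*s) ^ tau) := by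
          apply ENNReal.ofReal_le_ofReal
          -- real arithmetic
          have hmain : (rho ^ tau) ^ (m+1) * (((T.card : ℕ)):ℝ)
              ≤ (rho ^ tau) ^ (m+1) * ((L + rho ^ (m+1)) / (rho ^ tau * rho ^ m) + 1) := by
            apply mul_le_mul_of_nonneg_left hcardR (by positivity)
          refine hmain.trans ?_
          rw [← hL]
          -- key estimate
          have hpm : (0:ℝ) < rho ^ m := pow_pos hr0 m
          have hA : (rho ^ tau) ^ (m+1) * ((L + rho ^ (m+1)) / (rho ^ tau * rho ^ m))
              ≤ 2 * L ^ tau := by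
            have e1 : (rho ^ tau) ^ (m+1) * ((L + rho ^ (m+1)) / (rho ^ tau * rho ^ m))
                = (rho ^ tau) ^ m * (L + rho ^ (m+1)) / rho ^ m := by
              rw [pow_succ]
              field_simp
            rw [e1]
            have e2 : (rho ^ tau) ^ m = (rho ^ m) ^ tau := by
              rw [← Real.rpow_natCast (rho ^ tau) m, ← Real.rpow_natCast rho m,
                ← Real.rpow_mul hr0.le, ← Real.rpow_mul hr0.le, mul_comm]
            have e3 : (rho ^ m) ^ tau / rho ^ m = (rho ^ m) ^ (tau - 1) := by
              rw [Real.rpow_sub hpm, Real.rpow_one]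
            have e4 : (rho ^ m) ^ (tau - 1) ≤ L ^ (tau - 1) :=
              Real.rpow_le_rpow_of_nonpos hL0 hLle (by linarith)
            have e5 : L * L ^ (tau - 1) = L ^ tau := by
              nth_rewrite 1 [← Real.rpow_one L]
              rw [← Real.rpow_add hL0]
              norm_num
            calc (rho ^ tau) ^ m * (L + rho ^ (m+1)) / rho ^ m
                ≤ (rho ^ tau) ^ m * (2 * L) / rho ^ m := by
                  gcongr
                  · linarith
              _ = 2 * L * ((rho ^ m) ^ tau / rho ^ m) := by rw [e2]; ring
              _ = 2 * L * (rho ^ m) ^ (tau - 1) := by rw [e3]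
              _ ≤ 2 * L * L ^ (tau - 1) := by
                  apply mul_le_mul_of_nonneg_left e4 (by linarith)
              _ = 2 * L ^ tau := by rw [mul_assoc, e5]
          have hB : (rho ^ tau) ^ (m+1) ≤ L ^ tau := by
            have e2 : (rho ^ tau) ^ (m+1) = (rho ^ (m+1)) ^ tau := by
              rw [← Real.rpow_natCast (rho ^ tau) (m+1), ← Real.rpow_natCast rho (m+1),
                ← Real.rpow_mul hr0.le, ← Real.rpow_mul hr0.le, mul_comm]
            rw [e2]
            exact Real.rpow_le_rpow (by positivity) hKlt.le ht0.le
          calc (rho ^ tau) ^ (m+1) * ((L + rho ^ (m+1)) / (rho ^ tau * rho ^ m) + 1)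
              = (rho ^ tau) ^ (m+1) * ((L + rho ^ (m+1)) / (rho ^ tau * rho ^ m))
                + (rho ^ tau) ^ (m+1) := by ring
            _ ≤ 2 * L ^ tau + L ^ tau := add_le_add hA hB
            _ = 3 * L ^ tau := by ring

end MainBound

section Final

variable {tau rho : ℝ} {M : ℕ} {nu0 : Measure ℝ}

lemma nu0_Icc_eq_one (ht0 : 0 < tau) (ht1 : tau < 1) (hr0 : 0 < rho) (hr2 : rho ≤ 1/2)
    (hM2 : 2 ≤ M) (hM : (M : ℝ) = rho ^ (-tau)) (hprob : IsProbabilityMeasure nu0)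
    (hself : nu0 = (M : ENNReal)⁻¹ •
        ∑ j ∈ Finset.range M,
          Measure.map (fun x : Real => rho * x + (j : Real) * rho ^ tau) nu0) :
    nu0 (Set.Icc (0:ℝ) 1) = 1 := by
  have hconull := icc_conull ht0 ht1 hr0 hr2 hM2 hM hprob hself
  have h := measure_inter_conull (μ := nu0) (s := Set.univ) (t := Set.Icc (0:ℝ) 1) hconull
  rw [Set.univ_inter, measure_univ] at h
  exact h

lemma nu0_Icc_lower (ht0 : 0 < tau) (ht1 : tau < 1) (hr0 : 0 < rho) (hr2 : rho ≤ 1/2)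
    (hM2 : 2 ≤ M) (hM : (M : ℝ) = rho ^ (-tau)) (hprob : IsProbabilityMeasure nu0)
    (hself : nu0 = (M : ENNReal)⁻¹ •
        ∑ j ∈ Finset.range M,
          Measure.map (fun x : Real => rho * x + (j : Real) * rho ^ tau) nu0) :
    ENNReal.ofReal (rho ^ tau) ≤ nu0 (Set.Icc 0 (rho ^ ((1+tau)/2))) := by
  have hr1 : rho < 1 := by linarith
  have hρτ : (0:ℝ) < rho ^ tau := Real.rpow_pos_of_pos hr0 tau
  have hMrt : (M : ℝ) * rho ^ tau = 1 := by
    rw [hM, Real.rpow_neg hr0.le, inv_mul_cancel₀ (ne_of_gt hρτ)]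
  have hMinv : ((M : ℝ≥0∞))⁻¹ = ENNReal.ofReal (rho ^ tau) := by
    have hM0 : (0:ℝ) < (M:ℝ) := by positivity
    rw [← ENNReal.ofReal_natCast M, ← ENNReal.ofReal_inv_of_pos hM0]
    congr 1
    exact inv_eq_of_mul_eq_one_right hMrt
  set a : ℝ := rho ^ ((1+tau)/2) with ha
  have hra : rho ≤ a := by
    rw [ha]
    calc rho = rho ^ (1:ℝ) := (Real.rpow_one rho).symm
      _ ≤ rho ^ ((1+tau)/2) := Real.rpow_le_rpow_of_exponent_ge hr0 hr1.le (by linarith)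
  have happ : nu0 (Set.Icc 0 a) = (M : ℝ≥0∞)⁻¹ *
      ∑ j ∈ Finset.range M,
        nu0 ((fun x : ℝ => rho * x + (j:ℝ) * rho ^ tau) ⁻¹' Set.Icc 0 a) := by
    conv_lhs => rw [hself]
    rw [Measure.smul_apply, Measure.finset_sum_apply]
    simp only [smul_eq_mul]
    congr 1
    exact Finset.sum_congr rfl fun j _ => Measure.map_apply (meas_aff _ _) measurableSet_Icc
  have hsub : Set.Icc (0:ℝ) 1 ⊆ (fun x : ℝ => rho * x + ((0:ℕ):ℝ) * rho ^ tau) ⁻¹' Set.Icc 0 a := by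
    intro x hx
    simp only [Set.mem_Icc, Set.mem_preimage, Nat.cast_zero, zero_mul, add_zero] at hx ⊢
    constructor
    · nlinarith [hx.1]
    · nlinarith [hx.2]
  have h0 : nu0 ((fun x : ℝ => rho * x + ((0:ℕ):ℝ) * rho ^ tau) ⁻¹' Set.Icc 0 a) = 1 := by
    refine le_antisymm prob_le_one ?_
    calc (1:ℝ≥0∞) = nu0 (Set.Icc 0 1) :=
          (nu0_Icc_eq_one ht0 ht1 hr0 hr2 hM2 hM hprob hself).symm
      _ ≤ _ := measure_mono hsub
  calc ENNReal.ofReal (rho ^ tau) = (M : ℝ≥0∞)⁻¹ * 1 := by rw [hMinv, mul_one]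
    _ = (M : ℝ≥0∞)⁻¹ * nu0 ((fun x : ℝ => rho * x + ((0:ℕ):ℝ) * rho ^ tau) ⁻¹' Set.Icc 0 a) := by
        rw [h0]
    _ ≤ (M : ℝ≥0∞)⁻¹ * ∑ j ∈ Finset.range M,
        nu0 ((fun x : ℝ => rho * x + (j:ℝ) * rho ^ tau) ⁻¹' Set.Icc 0 a) := by
        apply mul_le_mul_right
        exact Finset.single_le_sum (f := fun j : ℕ =>
          nu0 ((fun x : ℝ => rho * x + (j:ℝ) * rho ^ tau) ⁻¹' Set.Icc 0 a))
          (fun i _ => zero_le) (Finset.mem_range.mpr (by omega))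
    _ = nu0 (Set.Icc 0 a) := happ.symm

end Final

/-- Section 4: properties of the renormalised pushforward `nu` of the self-similar measure
`nu_0` under `theta ↦ rho^(-(1+tau)/2) * theta`. -/
theorem stmt12 :
    ∃ C : Real, 0 < C ∧
    forall (tau rho : Real) (M : Nat) (nu0 : Measure Real),
      0 < tau -> tau < 1 -> 0 < rho -> rho <= 1/2 ->
      (∃ N : Nat, 2 <= N ∧ (N : Real) = rho⁻¹) ->
      2 <= M -> (M : Real) = rho ^ (-tau) ->
      IsProbabilityMeasure nu0 ->
      nu0 = (M : ENNReal)⁻¹ •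
        ∑ j ∈ Finset.range M,
          Measure.map (fun x : Real => rho * x + (j : Real) * rho ^ tau) nu0 ->
      let nubar : Measure Real :=
        Measure.map (fun theta : Real => rho ^ (-(1 + tau)/2) * theta) nu0
      let nu : Measure Real := (nubar (Set.Icc 0 1))⁻¹ • nubar.restrict (Set.Icc 0 1)
      ENNReal.ofReal (rho ^ tau) <= nubar (Set.Icc 0 1) ∧
      IsProbabilityMeasure nu ∧ nu (Set.Icc 0 1) = 1 ∧
      forall x : Real, forall r : Real, 0 < r ->
        nu (Metric.closedBall x r) <=
          ENNReal.ofReal (C * rho ^ (tau * (tau - 1)/2) * r ^ tau) := by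
  refine ⟨6, by norm_num, ?_⟩
  intro tau rho M nu0 ht0 ht1 hr0 hr2 hNex hM2 hM hprob hself nubar nu
  have hr1 : rho < 1 := by linarith
  have hρτ : (0:ℝ) < rho ^ tau := Real.rpow_pos_of_pos hr0 tau
  set lam : ℝ := rho ^ (-(1 + tau)/2) with hlam
  have hlampos : 0 < lam := Real.rpow_pos_of_pos hr0 _
  set a : ℝ := rho ^ ((1+tau)/2) with ha
  have hapos : 0 < a := Real.rpow_pos_of_pos hr0 _
  have hlama : lam * a = 1 := by
    rw [hlam, ha, ← Real.rpow_add hr0]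
    rw [show -(1+tau)/2 + (1+tau)/2 = 0 by ring, Real.rpow_zero]
  have hmeas : Measurable (fun theta : ℝ => lam * theta) := measurable_id.const_mul lam
  have hnubar : nubar = Measure.map (fun theta : ℝ => lam * theta) nu0 := rfl
  have hprebar : (fun theta : ℝ => lam * theta) ⁻¹' Set.Icc 0 1 = Set.Icc 0 a := by
    ext θ
    simp only [Set.mem_preimage, Set.mem_Icc]
    constructor
    · rintro ⟨h1, h2⟩
      constructor
      · nlinarith
      · nlinarith
    · rintro ⟨h1, h2⟩
      constructor
      · positivity
      · nlinarith
  have hbarIcc : nubar (Set.Icc 0 1) = nu0 (Set.Icc 0 a) := by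
    rw [hnubar, Measure.map_apply hmeas measurableSet_Icc, hprebar]
  have part1 : ENNReal.ofReal (rho ^ tau) ≤ nubar (Set.Icc 0 1) := by
    rw [hbarIcc]
    exact nu0_Icc_lower ht0 ht1 hr0 hr2 hM2 hM hprob hself
  haveI hbarprob : IsProbabilityMeasure nubar := by
    rw [hnubar]
    exact Measure.isProbabilityMeasure_map hmeas.aemeasurable
  set c : ℝ≥0∞ := nubar (Set.Icc 0 1) with hc
  have hc0 : c ≠ 0 := by
    intro h
    rw [h] at part1
    simp only [le_zero_iff, ENNReal.ofReal_eq_zero] at part1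
    linarith
  have hctop : c ≠ ⊤ := measure_ne_top _ _
  have hnu : nu = c⁻¹ • nubar.restrict (Set.Icc 0 1) := rfl
  have part2 : IsProbabilityMeasure nu := by
    constructor
    rw [hnu, Measure.smul_apply, Measure.restrict_apply MeasurableSet.univ, Set.univ_inter,
      smul_eq_mul, ← hc, ENNReal.inv_mul_cancel hc0 hctop]
  have part3 : nu (Set.Icc 0 1) = 1 := by
    rw [hnu, Measure.smul_apply, Measure.restrict_apply measurableSet_Icc, Set.inter_self,
      smul_eq_mul, ← hc, ENNReal.inv_mul_cancel hc0 hctop]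
  refine ⟨part1, part2, part3, ?_⟩
  intro x r hr
  -- pushforward of closed ball
  have hpreball : (fun theta : ℝ => lam * theta) ⁻¹' Metric.closedBall x r
      = Metric.closedBall (x*a) (r*a) := by
    ext θ
    simp only [Set.mem_preimage, Metric.mem_closedBall, Real.dist_eq]
    have hrew : lam * θ - x = lam * (θ - x * a) := by
      rw [mul_sub, show lam * (x * a) = (lam * a) * x by ring, hlama, one_mul]
    rw [hrew, abs_mul, abs_of_pos hlampos]
    constructor
    · intro h
      have h2 : |θ - x * a| ≤ r / lam := by
        rw [le_div_iff₀ hlampos]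
        linarith [h]
      have : r / lam = r * a := by
        rw [div_eq_mul_inv]
        congr 1
        rw [hlam, ← Real.rpow_neg hr0.le, ha]
        congr 1
        ring
      linarith [this ▸ h2]
    · intro h
      calc lam * |θ - x*a| ≤ lam * (r * a) := mul_le_mul_of_nonneg_left h hlampos.le
        _ = r * (lam * a) := by ring
        _ = r := by rw [hlama, mul_one]
  have hballbar : nubar (Metric.closedBall x r) = nu0 (Metric.closedBall (x*a) (r*a)) := by
    rw [hnubar, Measure.map_apply hmeas measurableSet_closedBall, hpreball]
  have hball0 : nu0 (Metric.closedBall (x*a) (r*a)) ≤ ENNReal.ofReal (3 * (2*(r*a)) ^ tau) :=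
    nu0_closedBall ht0 ht1 hr0 hr2 hNex hM2 hM hprob hself (x*a) (r*a) (by positivity)
  -- main chain
  have step1 : nu (Metric.closedBall x r) ≤ (ENNReal.ofReal (rho ^ tau))⁻¹ *
      ENNReal.ofReal (3 * (2*(r*a)) ^ tau) := by
    calc nu (Metric.closedBall x r)
        = c⁻¹ * nubar (Metric.closedBall x r ∩ Set.Icc 0 1) := by
          rw [hnu, Measure.smul_apply, Measure.restrict_apply measurableSet_closedBall,
            smul_eq_mul]
      _ ≤ c⁻¹ * nubar (Metric.closedBall x r) :=
          mul_le_mul_right (measure_mono Set.inter_subset_left) _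
      _ ≤ (ENNReal.ofReal (rho ^ tau))⁻¹ * nubar (Metric.closedBall x r) :=
          mul_le_mul_left (ENNReal.inv_le_inv.mpr part1) _
      _ ≤ (ENNReal.ofReal (rho ^ tau))⁻¹ * ENNReal.ofReal (3 * (2*(r*a)) ^ tau) := by
          rw [hballbar]
          exact mul_le_mul_right hball0 _
  refine step1.trans ?_
  rw [← ENNReal.div_eq_inv_mul, ← ENNReal.ofReal_div_of_pos hρτ]
  apply ENNReal.ofReal_le_ofReal
  -- final real arithmetic
  have h2τ : (2:ℝ) ^ tau ≤ 2 := by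
    calc (2:ℝ) ^ tau ≤ (2:ℝ) ^ (1:ℝ) := Real.rpow_le_rpow_of_exponent_le (by norm_num) ht1.le
      _ = 2 := Real.rpow_one 2
  have haτ : a ^ tau / rho ^ tau = rho ^ (tau * (tau - 1)/2) := by
    rw [ha, ← Real.rpow_mul hr0.le, ← Real.rpow_sub hr0]
    congr 1
    ring
  have hsplit : (2*(r*a)) ^ tau = 2 ^ tau * (r ^ tau * a ^ tau) := by
    rw [Real.mul_rpow (by norm_num) (by positivity), Real.mul_rpow hr.le hapos.le]
  have hrpos : (0:ℝ) < r ^ tau := Real.rpow_pos_of_pos hr tau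
  have hEpos : (0:ℝ) < rho ^ (tau * (tau - 1)/2) := Real.rpow_pos_of_pos hr0 _
  calc 3 * (2*(r*a)) ^ tau / rho ^ tau
      = (3 * 2 ^ tau) * (r ^ tau * (a ^ tau / rho ^ tau)) := by
        rw [hsplit]
        field_simp
    _ = (3 * 2 ^ tau) * (r ^ tau * rho ^ (tau * (tau - 1)/2)) := by rw [haτ]
    _ ≤ 6 * (r ^ tau * rho ^ (tau * (tau - 1)/2)) := by
        apply mul_le_mul_of_nonneg_right (by linarith) (by positivity)
    _ = 6 * rho ^ (tau * (tau - 1)/2) * r ^ tau := by ring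
end
end
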